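/- Let H be a separable real Hilbert space with orthonormal basis (h_n)_{n≥1}, let E, F, G be real Banach spaces, and let (γ_n)_{n≥1} be a sequence of independent standard real Gaussian random variables on a probability space (Ω,F,P). Suppose R : H → E and S : H → F are bounded linear operators such that the Gaussian sums ∑_{n≥1} γ_n R h_n and ∑_{n≥1} γ_n S h_n converge in L²(Ω;E) and L²(Ω;F) respectively, and let T : E → L(F,G) be a bounded linear operator (i.e., a bounded bilinear map E × F → G). Then the series ∑_{n≥1} (T(R h_n))(S h_n) converges in G. -/

import Mathlib

/-!
Expanding the pairing of the two Gaussian partial sums and using `E[γₘ γₙ] = δₘₙ` gives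
`E[T (∑_{n<N} γₙ R hₙ) (∑_{n<N} γₙ S hₙ)] = ∑_{n<N} T (R hₙ) (S hₙ)`. The left-hand side converges
to `E[T ξ_R ξ_S]`, since by Hölder `(f, g) ↦ E[T f g]` is a continuous bilinear pairing
`L²(Ω; E) × L²(Ω; F) → G`.
-/

open MeasureTheory ProbabilityTheory Filter Topology

namespace ProbabilityTheory

variable {Ω : Type*} [MeasurableSpace Ω] {P : Measure Ω} {X : Ω → ℝ} {μ : ℝ} {v : NNReal}

lemma HasLaw.memLp_of_gaussianReal (hX : HasLaw X (gaussianReal μ v) P) {p : ENNReal}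
    (hp : p ≠ ⊤) : MemLp X p P := by
  rw [← Function.id_comp X, ← memLp_map_measure_iff aestronglyMeasurable_id hX.aemeasurable,
    hX.map_eq]
  exact memLp_id_gaussianReal' p hp

lemma HasLaw.integral_of_gaussianReal (hX : HasLaw X (gaussianReal μ v) P) :
    ∫ ω, X ω ∂P = μ := by
  simp [hX.integral_eq]

lemma integral_sq_gaussianReal_zero : ∫ x, x ^ 2 ∂gaussianReal 0 v = v := by
  simpa using (variance_eq_integral (μ := gaussianReal 0 v) measurable_id'.aemeasurable).symm

lemma HasLaw.integral_sq_of_gaussianReal (hX : HasLaw X (gaussianReal 0 v) P) :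
    ∫ ω, X ω ^ 2 ∂P = v := by
  rw [← integral_sq_gaussianReal_zero]
  exact hX.integral_comp (f := fun x => x ^ 2) (by fun_prop)

lemma integral_mul_eq_ite_of_iIndepFun_gaussianReal {ι : Type*} [DecidableEq ι]
    {γ : ι → Ω → ℝ} (hγ : ∀ i, HasLaw (γ i) (gaussianReal 0 1) P) (hindep : iIndepFun γ P)
    (i j : ι) : ∫ ω, γ i ω * γ j ω ∂P = if i = j then 1 else 0 := by
  split_ifs with hij
  · subst hij
    simpa only [sq, NNReal.coe_one] using (hγ i).integral_sq_of_gaussianReal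
  · rw [(hindep.indepFun hij).integral_fun_mul_eq_mul_integral
      (hγ i).aemeasurable.aestronglyMeasurable (hγ j).aemeasurable.aestronglyMeasurable,
      (hγ i).integral_of_gaussianReal, zero_mul]

end ProbabilityTheory

section Bilinear

variable {Ω E F G : Type*} [MeasurableSpace Ω] {P : Measure Ω}
  [NormedAddCommGroup E] [NormedSpace ℝ E] [NormedAddCommGroup F] [NormedSpace ℝ F]
  [NormedAddCommGroup G] [NormedSpace ℝ G] [CompleteSpace G]

lemma memLp_sum_smul {ι : Type*} {p : ENNReal} {γ : ι → Ω → ℝ} (hγ : ∀ i, MemLp (γ i) p P)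
    (s : Finset ι) (x : ι → E) : MemLp (fun ω => ∑ i ∈ s, γ i ω • x i) p P :=
  memLp_finsetSum s fun i _ => (memLp_top_const (x i)).smul (hγ i)

namespace ContinuousLinearMap

lemma integral_apply_sum_smul_sum_smul_of_orthonormal {ι : Type*} [DecidableEq ι]
    (T : E →L[ℝ] F →L[ℝ] G) {γ : ι → Ω → ℝ} (hγ : ∀ i, MemLp (γ i) 2 P)
    (horth : ∀ i j, ∫ ω, γ i ω * γ j ω ∂P = if i = j then 1 else 0)
    (s : Finset ι) (x : ι → E) (y : ι → F) :
    ∫ ω, T (∑ i ∈ s, γ i ω • x i) (∑ i ∈ s, γ i ω • y i) ∂P = ∑ i ∈ s, T (x i) (y i) := by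
  have hint : ∀ i j, Integrable (fun ω => (γ j ω * γ i ω) • T (x i) (y j)) P := fun i j =>
    ((hγ j).integrable_mul (hγ i)).smul_const _
  calc ∫ ω, T (∑ i ∈ s, γ i ω • x i) (∑ i ∈ s, γ i ω • y i) ∂P
      = ∫ ω, ∑ j ∈ s, ∑ i ∈ s, (γ j ω * γ i ω) • T (x i) (y j) ∂P := by
        simp only [map_sum, map_smul, sum_apply, smul_apply, Finset.smul_sum, smul_smul]
    _ = ∑ j ∈ s, ∑ i ∈ s, (∫ ω, γ j ω * γ i ω ∂P) • T (x i) (y j) := by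
        rw [integral_finsetSum _ fun j _ => integrable_finsetSum _ fun i _ => hint i j]
        refine Finset.sum_congr rfl fun j _ => ?_
        rw [integral_finsetSum _ fun i _ => hint i j]
        exact Finset.sum_congr rfl fun i _ => integral_smul_const _ _
    _ = ∑ j ∈ s, T (x j) (y j) := by
        simp only [horth, ite_smul, one_smul, zero_smul, Finset.sum_ite_eq]
        exact Finset.sum_congr rfl fun j hj => if_pos hj

lemma lpPairing_toLp {p q : ENNReal} [Fact (1 ≤ p)] [Fact (1 ≤ q)] [p.HolderConjugate q]
    (T : E →L[ℝ] F →L[ℝ] G) {u : Ω → E} {v : Ω → F} (hu : MemLp u p P) (hv : MemLp v q P) :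
    T.lpPairing P p q (hu.toLp u) (hv.toLp v) = ∫ ω, T (u ω) (v ω) ∂P := by
  rw [lpPairing_eq_integral]
  refine integral_congr_ae ?_
  filter_upwards [hu.coeFn_toLp, hv.coeFn_toLp] with ω hu hv
  rw [hu, hv]

lemma tendsto_integral_apply_of_tendsto_eLpNorm {ι : Type*} {l : Filter ι}
    (T : E →L[ℝ] F →L[ℝ] G) {f : ι → Ω → E} {g : ι → Ω → F} {f₀ : Ω → E} {g₀ : Ω → F}
    (hf : ∀ i, MemLp (f i) 2 P) (hg : ∀ i, MemLp (g i) 2 P)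
    (hf₀ : MemLp f₀ 2 P) (hg₀ : MemLp g₀ 2 P)
    (hff₀ : Tendsto (fun i => eLpNorm (f i - f₀) 2 P) l (𝓝 0))
    (hgg₀ : Tendsto (fun i => eLpNorm (g i - g₀) 2 P) l (𝓝 0)) :
    Tendsto (fun i => ∫ ω, T (f i ω) (g i ω) ∂P) l (𝓝 (∫ ω, T (f₀ ω) (g₀ ω) ∂P)) := by
  have hF := (Lp.tendsto_Lp_iff_tendsto_eLpNorm'' f hf f₀ hf₀).2 hff₀
  have hG := (Lp.tendsto_Lp_iff_tendsto_eLpNorm'' g hg g₀ hg₀).2 hgg₀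
  simpa only [Function.comp_def, Function.uncurry_apply_pair, lpPairing_toLp] using
    ((T.lpPairing P 2 2).continuous₂.tendsto _).comp (hF.prodMk_nhds hG)

end ContinuousLinearMap

end Bilinear

theorem trace_series_converges_general
    {H E F G Ω : Type*}
    [NormedAddCommGroup H] [InnerProductSpace ℝ H]
    [NormedAddCommGroup E] [NormedSpace ℝ E]
    [NormedAddCommGroup F] [NormedSpace ℝ F]
    [NormedAddCommGroup G] [NormedSpace ℝ G] [CompleteSpace G]
    [MeasurableSpace Ω] {P : Measure Ω}
    (h : HilbertBasis ℕ ℝ H)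
    (γ : ℕ → Ω → ℝ) (hγmeas : ∀ n, Measurable (γ n))
    (hγindep : iIndepFun γ P)
    (hγdist : ∀ n, Measure.map (γ n) P = gaussianReal 0 1)
    (R : H →L[ℝ] E) (S : H →L[ℝ] F)
    (ξR : Ω → E) (hξR : MemLp ξR 2 P)
    (hRconv : Tendsto
      (fun N => eLpNorm (fun ω => (∑ n ∈ Finset.range N, γ n ω • R (h n)) - ξR ω) 2 P)
      atTop (nhds 0))
    (ξS : Ω → F) (hξS : MemLp ξS 2 P)
    (hSconv : Tendsto
      (fun N => eLpNorm (fun ω => (∑ n ∈ Finset.range N, γ n ω • S (h n)) - ξS ω) 2 P)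
      atTop (nhds 0))
    (T : E →L[ℝ] F →L[ℝ] G) :
    ∃ g : G, Tendsto (fun N => ∑ n ∈ Finset.range N, T (R (h n)) (S (h n)))
      atTop (nhds g) := by
  have hγ : ∀ n, HasLaw (γ n) (gaussianReal 0 1) P := fun n =>
    ⟨(hγmeas n).aemeasurable, hγdist n⟩
  have hγ2 : ∀ n, MemLp (γ n) 2 P := fun n =>
    (hγ n).memLp_of_gaussianReal ENNReal.ofNat_ne_top
  refine ⟨∫ ω, T (ξR ω) (ξS ω) ∂P, ?_⟩
  simpa only [T.integral_apply_sum_smul_sum_smul_of_orthonormal hγ2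
      (integral_mul_eq_ite_of_iIndepFun_gaussianReal hγ hγindep)] using
    T.tendsto_integral_apply_of_tendsto_eLpNorm (fun _ => memLp_sum_smul hγ2 _ _)
      (fun _ => memLp_sum_smul hγ2 _ _) hξR hξS hRconv hSconv

/-- If `R : H → E` and `S : H → F` are γ-radonifying with respect to the
orthonormal basis `(h_n)` (i.e. the Gaussian sums converge in `L²(Ω;E)`, resp. `L²(Ω;F)`),
and `T : E → L(F,G)` is a bounded bilinear map, then the series `∑ (T (R h_n)) (S h_n)`
converges in `G`. -/
theorem trace_series_converges
    {H E F G Ω : Type*}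
    [NormedAddCommGroup H] [InnerProductSpace ℝ H] [CompleteSpace H]
    [NormedAddCommGroup E] [NormedSpace ℝ E] [CompleteSpace E]
    [NormedAddCommGroup F] [NormedSpace ℝ F] [CompleteSpace F]
    [NormedAddCommGroup G] [NormedSpace ℝ G] [CompleteSpace G]
    [MeasurableSpace Ω] {P : Measure Ω} [IsProbabilityMeasure P]
    (h : HilbertBasis ℕ ℝ H)
    (γ : ℕ → Ω → ℝ) (hγmeas : ∀ n, Measurable (γ n))
    (hγindep : iIndepFun γ P)
    (hγdist : ∀ n, Measure.map (γ n) P = gaussianReal 0 1)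
    (R : H →L[ℝ] E) (S : H →L[ℝ] F)
    (ξR : Ω → E) (hξR : MemLp ξR 2 P)
    (hRconv : Tendsto
      (fun N => eLpNorm (fun ω => (∑ n ∈ Finset.range N, γ n ω • R (h n)) - ξR ω) 2 P)
      atTop (nhds 0))
    (ξS : Ω → F) (hξS : MemLp ξS 2 P)
    (hSconv : Tendsto
      (fun N => eLpNorm (fun ω => (∑ n ∈ Finset.range N, γ n ω • S (h n)) - ξS ω) 2 P)
      atTop (nhds 0))
    (T : E →L[ℝ] F →L[ℝ] G) :
    ∃ g : G, Tendsto (fun N => ∑ n ∈ Finset.range N, T (R (h n)) (S (h n)))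
      atTop (nhds g) :=
  trace_series_converges_general h γ hγmeas hγindep hγdist R S ξR hξR hRconv ξS hξS hSconv T
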